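/- Let μ be a singular Borel probability measure on [0,1), let {g_n}_{n≥0} be the Kaczmarz auxiliary sequence of the exponentials in L²(μ), and let f ∈ L²(μ). Then for every z in the open unit disk 𝔻, the normalized Cauchy transform satisfies V_μ f(z) = Σ_{n=0}^∞ ⟨f, g_n⟩ z^n, i.e., (∫₀¹ f(x)/(1 − z e^{−2πix}) dμ(x)) / (∫₀¹ 1/(1 − z e^{−2πix}) dμ(x)) = Σ_{n=0}^∞ ⟨f, g_n⟩ z^n. -/

import Mathlib

/-!
Expanding `1 / (1 - z e^{-2πix})` geometrically, the numerator and the denominator of `V_μ f(z)`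
are the generating functions of `⟨f, e_n⟩` and of the Fourier coefficients
`μ̂(n) = ∫ e^{-2πinx} dμ`. Since `⟨e_i, e_j⟩ = μ̂(j - i)` for `i ≤ j` and `‖e_n‖ = 1`, the
recursion defining `g_n` says `e_n = Σ_{i ≤ n} ⟨e_n, e_i⟩ g_i`, so `⟨f, e_n⟩` is the Cauchy
product of `⟨f, g_n⟩` and `μ̂(n)`. The denominator has real part at least `1/2` on the disk, so the
quotient is holomorphic there and its Taylor series converges on the whole disk; cancelling `μ̂`
in the ring of formal power series identifies the Taylor coefficients with `⟨f, g_n⟩`.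
Here `⟨·, ·⟩` is linear in the first slot, so `⟨f, e_n⟩` is `inner ℂ (e n) f`.
-/

open MeasureTheory Filter
open scoped ENNReal

open FormalMultilinearSeries in
theorem hasFPowerSeriesOnBall_ofScalars_of_hasSum {a : ℕ → ℂ} {A : ℂ → ℂ} {r : ℝ≥0∞}
    (hr : 0 < r) (hA : ∀ w ∈ Metric.eball (0 : ℂ) r, HasSum (fun n ↦ a n * w ^ n) (A w)) :
    HasFPowerSeriesOnBall A (ofScalars ℂ a) 0 r where
  r_le := ENNReal.le_of_forall_nnreal_lt fun t ht ↦ by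
    have ht' : (t : ℂ) ∈ Metric.eball 0 r := by
      simpa [Metric.mem_eball, edist_zero_right, enorm, Complex.nnnorm_real] using ht
    have hsum := (hA t ht').summable
    refine (ofScalars ℂ a).le_radius_of_tendsto (l := 0) ?_
    simpa [ofScalars_norm] using hsum.tendsto_atTop_zero.norm
  r_pos := hr
  hasSum {w} hw := by
    simpa [ofScalars_apply_eq, mul_comm] using hA w hw

noncomputable def taylorPowerSeries {𝕜 : Type*} [NontriviallyNormedField 𝕜] (f : 𝕜 → 𝕜) (x : 𝕜) :
    PowerSeries 𝕜 :=
  PowerSeries.mk fun n ↦ iteratedDeriv n f x / n.factorial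

section TaylorPowerSeries

variable {𝕜 : Type*} [NontriviallyNormedField 𝕜] {f g : 𝕜 → 𝕜} {x : 𝕜}

theorem Filter.EventuallyEq.taylorPowerSeries_eq (hfg : f =ᶠ[nhds x] g) :
    taylorPowerSeries f x = taylorPowerSeries g x := by
  ext n
  simp [taylorPowerSeries, hfg.iteratedDeriv_eq n]

variable [CompleteSpace 𝕜] [CharZero 𝕜]

theorem HasFPowerSeriesAt.taylorPowerSeries_eq {a : ℕ → 𝕜}
    (hf : HasFPowerSeriesAt f (FormalMultilinearSeries.ofScalars 𝕜 a) x) :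
    taylorPowerSeries f x = PowerSeries.mk a := by
  rw [taylorPowerSeries, FormalMultilinearSeries.ofScalars_series_injective 𝕜 𝕜
    (hf.analyticAt.hasFPowerSeriesAt.eq_formalMultilinearSeries hf)]

theorem taylorPowerSeries_mul (hf : AnalyticAt 𝕜 f x) (hg : AnalyticAt 𝕜 g x) :
    taylorPowerSeries (f * g) x = taylorPowerSeries f x * taylorPowerSeries g x := by
  ext n
  simp only [taylorPowerSeries, PowerSeries.coeff_mk, PowerSeries.coeff_mul,
    iteratedDeriv_mul hf.contDiffAt hg.contDiffAt, Finset.sum_div,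
    Finset.Nat.sum_antidiagonal_eq_sum_range_succ_mk]
  refine Finset.sum_congr rfl fun i hi ↦ ?_
  rw [Nat.cast_choose 𝕜 (Finset.mem_range_succ_iff.mp hi)]
  have := Nat.cast_ne_zero (R := 𝕜) |>.mpr n.factorial_ne_zero
  field_simp

end TaylorPowerSeries

theorem hasSum_div_of_mk_eq_mul {a b β : ℕ → ℂ} {A B : ℂ → ℂ} {r : ℝ≥0∞}
    (hA : ∀ w ∈ Metric.eball (0 : ℂ) r, HasSum (fun n ↦ a n * w ^ n) (A w))
    (hB : ∀ w ∈ Metric.eball (0 : ℂ) r, HasSum (fun n ↦ β n * w ^ n) (B w))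
    (hB0 : ∀ w ∈ Metric.eball (0 : ℂ) r, B w ≠ 0)
    (hab : PowerSeries.mk a = PowerSeries.mk b * PowerSeries.mk β)
    {z : ℂ} (hz : z ∈ Metric.eball (0 : ℂ) r) :
    HasSum (fun n ↦ b n * z ^ n) (A z / B z) := by
  have hr : 0 < r := Metric.pos_of_mem_eball hz
  have h0 : (0 : ℂ) ∈ Metric.eball 0 r := Metric.mem_eball_self hr
  have hA' := hasFPowerSeriesOnBall_ofScalars_of_hasSum hr hA
  have hB' := hasFPowerSeriesOnBall_ofScalars_of_hasSum hr hB
  have hdiff : DifferentiableOn ℂ (A / B) (Metric.eball 0 r) :=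
    hA'.differentiableOn.div hB'.differentiableOn hB0
  have hβ : PowerSeries.mk β ≠ 0 := by
    intro hβ
    have hβn (n : ℕ) : β n = 0 := by simpa using PowerSeries.ext_iff.mp hβ n
    exact hB0 0 h0 <| (hB 0 h0).unique (by simp [hβn])
  have htaylor : taylorPowerSeries (A / B) 0 = PowerSeries.mk b := by
    refine mul_right_cancel₀ hβ ?_
    have hAB : A =ᶠ[nhds 0] A / B * B := by
      filter_upwards [Metric.eball_mem_nhds 0 hr] with w hw
      exact (div_mul_cancel₀ (A w) (hB0 w hw)).symm
    rw [← hab, ← hA'.hasFPowerSeriesAt.taylorPowerSeries_eq,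
      ← hB'.hasFPowerSeriesAt.taylorPowerSeries_eq, hAB.taylorPowerSeries_eq,
      taylorPowerSeries_mul (hdiff.analyticAt (Metric.eball_mem_nhds 0 hr)) hB'.analyticAt]
  refine (Complex.hasSum_taylorSeries_on_eball hdiff hz).congr_fun fun n ↦ ?_
  rw [← PowerSeries.coeff_mk n b, ← htaylor, taylorPowerSeries, PowerSeries.coeff_mk, sub_zero,
    smul_eq_mul, smul_eq_mul]
  ring

theorem Complex.one_half_le_re_inv_one_sub {w : ℂ} (hw : ‖w‖ < 1) : 1 / 2 ≤ (1 - w)⁻¹.re := by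
  have hw1 : 1 - w ≠ 0 := sub_ne_zero.2 fun h ↦ by simp [← h] at hw
  have hsq : w.re ^ 2 + w.im ^ 2 < 1 := by
    have := Complex.sq_norm w
    rw [Complex.normSq_apply] at this
    nlinarith [norm_nonneg w]
  rw [Complex.inv_re, le_div_iff₀ (Complex.normSq_pos.2 hw1), Complex.normSq_apply]
  simp only [Complex.sub_re, Complex.one_re, Complex.sub_im, Complex.one_im]
  nlinarith

section GeometricIntegral

variable {X : Type*} [MeasurableSpace X] {μ : Measure X} {u : X → ℂ}

theorem hasSum_integral_div_one_sub {φ : X → ℂ} (hu : AEStronglyMeasurable u μ)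
    (hu1 : ∀ x, ‖u x‖ ≤ 1) (hφ : Integrable φ μ) {z : ℂ} (hz : ‖z‖ < 1) :
    HasSum (fun n ↦ (∫ x, u x ^ n * φ x ∂μ) * z ^ n) (∫ x, φ x / (1 - z * u x) ∂μ) := by
  have hzu (x : X) : ‖z * u x‖ < 1 := by
    simpa [norm_mul] using mul_lt_one_of_nonneg_of_lt_one_left (norm_nonneg z) hz (hu1 x)
  have hF (n : ℕ) : Integrable (fun x ↦ (z * u x) ^ n * φ x) μ :=
    hφ.bdd_mul ((aestronglyMeasurable_const.mul hu).pow n)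
      (c := 1) (Eventually.of_forall fun x ↦ by
        simpa using pow_le_one₀ (norm_nonneg _) (hzu x).le)
  have hsum : Summable fun n ↦ ∫ x, ‖(z * u x) ^ n * φ x‖ ∂μ := by
    refine .of_nonneg_of_le (fun n ↦ integral_nonneg fun x ↦ norm_nonneg _) (fun n ↦ ?_)
      ((summable_geometric_of_lt_one (norm_nonneg z) hz).mul_right (∫ x, ‖φ x‖ ∂μ))
    rw [← integral_const_mul]
    refine integral_mono (hF n).norm (hφ.norm.const_mul _) fun x ↦ ?_
    simp only [norm_mul, norm_pow]
    gcongr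
    exact mul_le_of_le_one_right (norm_nonneg z) (hu1 x)
  have hgeom : (fun x ↦ φ x / (1 - z * u x)) = fun x ↦ ∑' n, (z * u x) ^ n * φ x := by
    funext x
    rw [tsum_mul_right, tsum_geometric_of_norm_lt_one (hzu x), div_eq_inv_mul]
  rw [hgeom]
  refine (hasSum_integral_of_summable_integral_norm hF hsum).congr_fun fun n ↦ ?_
  simp only [mul_pow, mul_assoc, integral_const_mul]
  ring

theorem one_half_le_re_integral_inv_one_sub [IsProbabilityMeasure μ]
    (hu : AEStronglyMeasurable u μ) (hu1 : ∀ x, ‖u x‖ ≤ 1) {z : ℂ} (hz : ‖z‖ < 1) :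
    1 / 2 ≤ (∫ x, (1 - z * u x)⁻¹ ∂μ).re := by
  have hzu (x : X) : ‖z * u x‖ ≤ ‖z‖ := by
    simpa [norm_mul] using mul_le_of_le_one_right (norm_nonneg z) (hu1 x)
  have hint : Integrable (fun x ↦ (1 - z * u x)⁻¹) μ := by
    refine .of_bound ((hu.aemeasurable.const_mul z).const_sub 1).inv.aestronglyMeasurable
      (1 - ‖z‖)⁻¹ (Eventually.of_forall fun x ↦ ?_)
    rw [norm_inv]
    refine inv_anti₀ (by linarith) ?_
    linarith [norm_sub_norm_le 1 (z * u x), norm_one (α := ℂ), hzu x]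
  calc (1 / 2 : ℝ) = ∫ _, 1 / 2 ∂μ := by simp
    _ ≤ ∫ x, (1 - z * u x)⁻¹.re ∂μ := integral_mono (integrable_const _) hint.re fun x ↦
      Complex.one_half_le_re_inv_one_sub ((hzu x).trans_lt hz)
    _ = (∫ x, (1 - z * u x)⁻¹ ∂μ).re := integral_re hint

end GeometricIntegral

section Kaczmarz

variable {𝕜 E : Type*} [RCLike 𝕜] [NormedAddCommGroup E] [InnerProductSpace 𝕜 E] {e g : ℕ → E}

theorem eq_sum_inner_smul_of_kaczmarz (he : ∀ n, inner 𝕜 (e n) (e n) = 1) (hg0 : g 0 = e 0)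
    (hg : ∀ n, g (n + 1) =
      e (n + 1) - ∑ i ∈ Finset.range (n + 1), inner 𝕜 (e i) (e (n + 1)) • g i) (n : ℕ) :
    e n = ∑ i ∈ Finset.range (n + 1), inner 𝕜 (e i) (e n) • g i := by
  cases n with
  | zero => rw [Finset.sum_range_one, he, one_smul, hg0]
  | succ n => rw [Finset.sum_range_succ, he, one_smul, hg n, add_sub_cancel]

theorem mk_inner_eq_mul_of_kaczmarz {c : ℕ → 𝕜}
    (hc : ∀ i j, i ≤ j → inner 𝕜 (e j) (e i) = c (j - i)) (hc0 : c 0 = 1) (hg0 : g 0 = e 0)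
    (hg : ∀ n, g (n + 1) =
      e (n + 1) - ∑ i ∈ Finset.range (n + 1), inner 𝕜 (e i) (e (n + 1)) • g i) (f : E) :
    PowerSeries.mk (fun n ↦ inner 𝕜 (e n) f) =
      PowerSeries.mk (fun n ↦ inner 𝕜 (g n) f) * PowerSeries.mk c := by
  have he (n : ℕ) : inner 𝕜 (e n) (e n) = 1 := by rw [hc n n le_rfl, Nat.sub_self, hc0]
  ext n
  simp only [PowerSeries.coeff_mk, PowerSeries.coeff_mul,
    Finset.Nat.sum_antidiagonal_eq_sum_range_succ_mk]
  conv_lhs => rw [eq_sum_inner_smul_of_kaczmarz he hg0 hg n, sum_inner]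
  refine Finset.sum_congr rfl fun i hi ↦ ?_
  rw [inner_smul_left, inner_conj_symm, hc i n (Finset.mem_range_succ_iff.mp hi), mul_comm]

end Kaczmarz

section Exponentials

open Complex Real

variable {μ : Measure ℝ} {e : ℕ → Lp ℂ 2 μ}

theorem inner_eq_integral_of_ae_eq_exp
    (he : ∀ n : ℕ, (e n : ℝ → ℂ) =ᵐ[μ] fun x ↦ cexp (2 * π * I * n * x)) (n : ℕ)
    (f : Lp ℂ 2 μ) :
    inner ℂ (e n) f = ∫ x, cexp (-(2 * π * I * x)) ^ n * f x ∂μ := by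
  rw [L2.inner_def]
  refine integral_congr_ae ?_
  filter_upwards [he n] with x hx
  rw [RCLike.inner_apply, hx, ← exp_conj, ← Complex.exp_nat_mul, mul_comm]
  congr 2
  simp only [map_mul, map_ofNat, conj_ofReal, conj_I, map_natCast]
  ring

theorem inner_eq_integral_pow_of_le
    (he : ∀ n : ℕ, (e n : ℝ → ℂ) =ᵐ[μ] fun x ↦ cexp (2 * π * I * n * x)) {i j : ℕ}
    (hij : i ≤ j) :
    inner ℂ (e j) (e i) = ∫ x, cexp (-(2 * π * I * x)) ^ (j - i) ∂μ := by
  rw [inner_eq_integral_of_ae_eq_exp he]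
  refine integral_congr_ae ?_
  filter_upwards [he i] with x hx
  obtain ⟨k, rfl⟩ := Nat.exists_eq_add_of_le hij
  have hcancel : cexp (-(2 * π * I * x)) ^ i * cexp (2 * π * I * i * x) = 1 := by
    rw [← Complex.exp_nat_mul, ← Complex.exp_add, ← Complex.exp_zero]
    ring_nf
  rw [hx, Nat.add_sub_cancel_left, pow_add, mul_right_comm, hcancel, one_mul]

end Exponentials

theorem normalized_cauchy_transform_series_general
    (μ : Measure ℝ) [IsProbabilityMeasure μ]
    (e : ℕ → Lp ℂ 2 μ)
    (he : ∀ n : ℕ, (e n : ℝ → ℂ) =ᵐ[μ]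
      fun x => Complex.exp (2 * Real.pi * Complex.I * n * x))
    (g : ℕ → Lp ℂ 2 μ)
    (hg0 : g 0 = e 0)
    (hg : ∀ n : ℕ, g (n + 1) =
      e (n + 1) - ∑ i ∈ Finset.range (n + 1), (inner ℂ (e i) (e (n + 1)) : ℂ) • g i)
    (f : Lp ℂ 2 μ) :
    ∀ z : ℂ, ‖z‖ < 1 →
      HasSum (fun n : ℕ => (inner ℂ (g n) f : ℂ) * z ^ n)
        ((∫ x, (f : ℝ → ℂ) x / (1 - z * Complex.exp (-(2 * Real.pi * Complex.I * x))) ∂μ) /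
          (∫ x, (1 - z * Complex.exp (-(2 * Real.pi * Complex.I * x)))⁻¹ ∂μ)) := by
  set u : ℝ → ℂ := fun x ↦ Complex.exp (-(2 * Real.pi * Complex.I * x))
  have hu : AEStronglyMeasurable u μ := by fun_prop
  have hu1 (x : ℝ) : ‖u x‖ ≤ 1 := by simp [u, Complex.norm_exp]
  have hball (w : ℂ) : w ∈ Metric.eball 0 1 ↔ ‖w‖ < 1 := by
    rw [← ENNReal.coe_one, Metric.eball_coe, NNReal.coe_one, mem_ball_zero_iff]
  intro z hz
  refine hasSum_div_of_mk_eq_mul (A := fun w ↦ ∫ x, (f : ℝ → ℂ) x / (1 - w * u x) ∂μ)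
    (B := fun w ↦ ∫ x, (1 - w * u x)⁻¹ ∂μ) (β := fun n ↦ ∫ x, u x ^ n ∂μ)
    (fun w hw ↦ ?_) (fun w hw ↦ ?_) (fun w hw ↦ ?_)
    (mk_inner_eq_mul_of_kaczmarz (fun _ _ ↦ inner_eq_integral_pow_of_le he) (by simp) hg0 hg f)
    ((hball z).2 hz)
  · simpa only [inner_eq_integral_of_ae_eq_exp he] using
      hasSum_integral_div_one_sub hu hu1 ((Lp.memLp f).integrable one_le_two) ((hball w).1 hw)
  · simpa using hasSum_integral_div_one_sub hu hu1 (integrable_const 1) ((hball w).1 hw)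
  · have := one_half_le_re_integral_inv_one_sub (μ := μ) hu hu1 ((hball w).1 hw)
    exact fun h ↦ by norm_num [h] at this

/-- Let `μ` be a singular Borel probability measure on `[0,1)`, `{g_n}` the
Kaczmarz auxiliary sequence of the exponentials in `L²(μ)`, and `f ∈ L²(μ)`.  Then for every
`z` in the open unit disk, the normalized Cauchy transform satisfies
`V_μ f(z) = (∫₀¹ f(x)/(1 - z e^{-2πix}) dμ(x)) / (∫₀¹ 1/(1 - z e^{-2πix}) dμ(x))
          = Σ_{n=0}^∞ ⟨f, g_n⟩ zⁿ`.
(Here `⟨f, g_n⟩` denotes the inner product linear in the first slot, i.e. `inner (g n) f`.) -/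
theorem normalized_cauchy_transform_series
    (μ : Measure ℝ) [IsProbabilityMeasure μ]
    (hsupp : μ (Set.Ico (0 : ℝ) 1)ᶜ = 0)
    (hsing : μ.MutuallySingular MeasureTheory.volume)
    (e : ℕ → Lp ℂ 2 μ)
    (he : ∀ n : ℕ, (e n : ℝ → ℂ) =ᵐ[μ]
      fun x => Complex.exp (2 * Real.pi * Complex.I * n * x))
    (g : ℕ → Lp ℂ 2 μ)
    (hg0 : g 0 = e 0)
    (hg : ∀ n : ℕ, g (n + 1) =
      e (n + 1) - ∑ i ∈ Finset.range (n + 1), (inner ℂ (e i) (e (n + 1)) : ℂ) • g i)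
    (f : Lp ℂ 2 μ) :
    ∀ z : ℂ, ‖z‖ < 1 →
      HasSum (fun n : ℕ => (inner ℂ (g n) f : ℂ) * z ^ n)
        ((∫ x, (f : ℝ → ℂ) x / (1 - z * Complex.exp (-(2 * Real.pi * Complex.I * x))) ∂μ) /
          (∫ x, (1 - z * Complex.exp (-(2 * Real.pi * Complex.I * x)))⁻¹ ∂μ)) :=
  normalized_cauchy_transform_series_general μ e he g hg0 hg f
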